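/- arXiv:math/0509558 — 2 statements merged into one kernel-verified Lean document; each statement's English description precedes it below -/
import Mathlib

section
/- With ψ and γ_ψ as above, for all a, b ≥ 0: ∫ π(dr) ∫_0^r e^{-aℓ}(1 - e^{-b(r-ℓ)}) dℓ = γ_ψ(a,b) - ψ(a)/a - βb, where ψ(a)/a is interpreted as ψ'(0) = α when a = 0. -/
/-!
Write `f(l, r) = e^{-lr} - 1 + lr`, so that `ψ(l) = αl + βl² + ∫ f(l, r) π(dr)`. For fixed `r`
the inner integral is elementary: it equals `(f(a,r) - f(b,r))/(a - b) - f(a,r)/a`, and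
`∂ₗf(a,r) - f(a,r)/a` when `a = b`. Since `0 ≤ f(l,r) ≤ C_l min(r, r²)` for `l ≥ 0`, everything
integrates against `π`, which gives the claim once `ψ'(a) = α + 2βa + ∫ ∂ₗf(a,r) π(dr)`.
For `a > 0` this is differentiation under the integral sign. At `a = 0` the derivative is
two-sided while `∫ f(l,·) dπ` may diverge for `l < 0`; convexity of `l ↦ f(l,r)` with
`f(0,r) = 0` gives `f(l,r)/|l| ≤ f(l₁,r)/|l₁|` for `l` between `0` and `l₁`, the domination
needed on each side.
-/

open MeasureTheory Set Filter Topology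

noncomputable def compensatedExp (l r : ℝ) : ℝ := Real.exp (-l * r) - 1 + l * r

lemma continuous_compensatedExp (l : ℝ) : Continuous (compensatedExp l) := by
  unfold compensatedExp; fun_prop

@[simp]
lemma compensatedExp_zero_left (r : ℝ) : compensatedExp 0 r = 0 := by
  simp [compensatedExp]

lemma compensatedExp_nonneg (l r : ℝ) : 0 ≤ compensatedExp l r := by
  have := Real.add_one_le_exp (-l * r)
  unfold compensatedExp; linarith

lemma hasDerivAt_compensatedExp (l r : ℝ) :
    HasDerivAt (compensatedExp · r) (r * (1 - Real.exp (-l * r))) l := by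
  have h := (((hasDerivAt_neg l).mul_const r).exp.sub_const 1).add (hasDerivAt_mul_const r)
  exact h.congr_deriv (by ring)

lemma tendsto_compensatedExp_div (r : ℝ) :
    Tendsto (fun l => compensatedExp l r / l) (𝓝[≠] 0) (𝓝 0) := by
  have h := hasDerivAt_iff_tendsto_slope.1 (by simpa using hasDerivAt_compensatedExp 0 r)
  refine h.congr fun l => ?_
  simp [slope_def_field]

lemma compensatedExp_mul_le {t : ℝ} (ht₀ : 0 ≤ t) (ht₁ : t ≤ 1) (l r : ℝ) :
    compensatedExp (t * l) r ≤ t * compensatedExp l r := by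
  have h := convexOn_exp.2 (mem_univ 0) (mem_univ (-l * r)) (sub_nonneg.2 ht₁) ht₀ (by ring)
  simp only [smul_eq_mul, mul_zero, zero_add, Real.exp_zero, mul_one] at h
  unfold compensatedExp
  rw [show -(t * l) * r = t * (-l * r) by ring]
  linarith

lemma abs_compensatedExp_div_le {l l₁ : ℝ} (h : l / l₁ ∈ Ioc 0 1) (r : ℝ) :
    |compensatedExp l r / l| ≤ compensatedExp l₁ r / |l₁| := by
  have hl₁ : l₁ ≠ 0 := by rintro rfl; simp at h
  have hl : l = l / l₁ * l₁ := (div_mul_cancel₀ l hl₁).symm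
  have key := compensatedExp_mul_le h.1.le h.2 l₁ r
  rw [← hl] at key
  rw [abs_div, abs_of_nonneg (compensatedExp_nonneg l r), div_le_div_iff₀ (by
    rw [hl, abs_mul]; exact mul_pos (abs_pos.2 h.1.ne') (abs_pos.2 hl₁)) (abs_pos.2 hl₁)]
  calc compensatedExp l r * |l₁| ≤ l / l₁ * compensatedExp l₁ r * |l₁| := by
        gcongr
    _ = compensatedExp l₁ r * |l| := by
        rw [hl, abs_mul, abs_of_pos h.1]; field_simp

lemma one_sub_exp_neg_le_min (x : ℝ) : 1 - Real.exp (-x) ≤ min 1 x := by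
  have := Real.add_one_le_exp (-x)
  exact le_min (by linarith [Real.exp_pos (-x)]) (by linarith)

lemma min_mul_le_max_mul_min {R : Type*} [Semiring R] [LinearOrder R] [IsOrderedRing R]
    {c d u v : R} (hu : 0 ≤ u) (hv : 0 ≤ v) : min (c * u) (d * v) ≤ max c d * min u v := by
  rcases le_total u v with h | h
  · rw [min_eq_left h]
    exact (min_le_left _ _).trans (mul_le_mul_of_nonneg_right (le_max_left c d) hu)
  · rw [min_eq_right h]
    exact (min_le_right _ _).trans (mul_le_mul_of_nonneg_right (le_max_right c d) hv)

lemma compensatedExp_le_max_mul_min {l r : ℝ} (hl : 0 ≤ l) (hr : 0 ≤ r) :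
    compensatedExp l r ≤ max l (l ^ 2) * min r (r ^ 2) := by
  have hx : 0 ≤ l * r := mul_nonneg hl hr
  have hlin : compensatedExp l r ≤ l * r := by
    have : Real.exp (-l * r) ≤ 1 := Real.exp_le_one_iff.2 (by nlinarith)
    unfold compensatedExp; linarith
  have hquad : compensatedExp l r ≤ (l * r) ^ 2 := by
    rcases le_total (l * r) 1 with h | h
    · have := (abs_le.1 (Real.abs_exp_sub_one_sub_id_le (x := -(l * r))
        (by rw [abs_neg, abs_of_nonneg hx]; exact h))).2
      unfold compensatedExp; rw [neg_mul]; nlinarith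
    · nlinarith
  calc compensatedExp l r ≤ min (l * r) (l ^ 2 * r ^ 2) :=
        le_min hlin (by rw [← mul_pow]; exact hquad)
    _ ≤ max l (l ^ 2) * min r (r ^ 2) := min_mul_le_max_mul_min hr (sq_nonneg r)

lemma mul_one_sub_exp_nonneg {x r : ℝ} (hx : 0 ≤ x) (hr : 0 ≤ r) :
    0 ≤ r * (1 - Real.exp (-x * r)) :=
  mul_nonneg hr (sub_nonneg.2 (Real.exp_le_one_iff.2 (by nlinarith [mul_nonneg hx hr])))

lemma mul_one_sub_exp_le_max_mul_min {x r : ℝ} (hr : 0 ≤ r) :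
    r * (1 - Real.exp (-x * r)) ≤ max 1 x * min r (r ^ 2) := by
  have h := one_sub_exp_neg_le_min (x * r)
  rw [← neg_mul] at h
  calc r * (1 - Real.exp (-x * r)) ≤ r * min 1 (x * r) := mul_le_mul_of_nonneg_left h hr
    _ = min (1 * r) (x * r ^ 2) := by rw [mul_min_of_nonneg _ _ hr]; ring_nf
    _ ≤ max 1 x * min r (r ^ 2) := min_mul_le_max_mul_min hr (sq_nonneg r)

lemma integral_exp_mul_of_ne_zero {c : ℝ} (hc : c ≠ 0) (r : ℝ) :
    ∫ l in (0 : ℝ)..r, Real.exp (c * l) = (Real.exp (c * r) - 1) / c := by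
  rw [intervalIntegral.integral_comp_mul_left (fun l => Real.exp l) hc, integral_exp, mul_zero,
    Real.exp_zero, smul_eq_mul, inv_mul_eq_div]

lemma integral_exp_mul_one_sub_exp (a b r : ℝ) :
    ∫ l in (0 : ℝ)..r, Real.exp (-a * l) * (1 - Real.exp (-b * (r - l)))
      = (∫ l in (0 : ℝ)..r, Real.exp (-a * l))
        - Real.exp (-b * r) * ∫ l in (0 : ℝ)..r, Real.exp ((b - a) * l) := by
  have h : ∀ l, Real.exp (-a * l) * (1 - Real.exp (-b * (r - l)))
      = Real.exp (-a * l) - Real.exp (-b * r) * Real.exp ((b - a) * l) := fun l => by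
    rw [mul_one_sub, ← Real.exp_add, ← Real.exp_add]; ring_nf
  simp_rw [h]
  rw [intervalIntegral.integral_sub ((by fun_prop : Continuous _).intervalIntegrable _ _)
    ((by fun_prop : Continuous _).intervalIntegrable _ _), intervalIntegral.integral_const_mul]

lemma integral_exp_mul_one_sub_exp_of_ne {a b : ℝ} (hab : a ≠ b) (r : ℝ) :
    ∫ l in (0 : ℝ)..r, Real.exp (-a * l) * (1 - Real.exp (-b * (r - l)))
      = (compensatedExp a r - compensatedExp b r) / (a - b) - compensatedExp a r / a := by
  have hba : b - a ≠ 0 := sub_ne_zero.2 hab.symm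
  have hexp : Real.exp (-b * r) * Real.exp ((b - a) * r) = Real.exp (-a * r) := by
    rw [← Real.exp_add]; ring_nf
  rw [integral_exp_mul_one_sub_exp, integral_exp_mul_of_ne_zero hba, mul_div_assoc', mul_sub_one,
    hexp]
  unfold compensatedExp
  rcases eq_or_ne a 0 with rfl | ha
  · simp only [intervalIntegral.integral_const, neg_zero, zero_mul, Real.exp_zero, div_zero]
    field_simp
    ring
  · rw [integral_exp_mul_of_ne_zero (neg_ne_zero.2 ha)]
    field_simp
    ring

lemma integral_exp_mul_one_sub_exp_self (a r : ℝ) :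
    ∫ l in (0 : ℝ)..r, Real.exp (-a * l) * (1 - Real.exp (-a * (r - l)))
      = r * (1 - Real.exp (-a * r)) - compensatedExp a r / a := by
  simp only [integral_exp_mul_one_sub_exp, sub_self, zero_mul, Real.exp_zero,
    intervalIntegral.integral_const, sub_zero, smul_eq_mul, mul_one]
  rcases eq_or_ne a 0 with rfl | ha
  · simp
  · rw [integral_exp_mul_of_ne_zero (neg_ne_zero.2 ha)]
    unfold compensatedExp
    field_simp
    ring

section Integral

variable {μ : Measure ℝ}

lemma integrable_compensatedExp (hm : Integrable (fun r => min r (r ^ 2)) μ)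
    (hμ : ∀ᵐ r ∂μ, 0 ≤ r) {l : ℝ} (hl : 0 ≤ l) : Integrable (compensatedExp l) μ := by
  refine (hm.const_mul (max l (l ^ 2))).mono'
    (continuous_compensatedExp l).aestronglyMeasurable ?_
  filter_upwards [hμ] with r hr
  rw [Real.norm_of_nonneg (compensatedExp_nonneg l r)]
  exact compensatedExp_le_max_mul_min hl hr

lemma integrable_mul_one_sub_exp (hm : Integrable (fun r => min r (r ^ 2)) μ)
    (hμ : ∀ᵐ r ∂μ, 0 ≤ r) {a : ℝ} (ha : 0 ≤ a) :
    Integrable (fun r => r * (1 - Real.exp (-a * r))) μ := by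
  refine (hm.const_mul (max 1 a)).mono' (by fun_prop) ?_
  filter_upwards [hμ] with r hr
  rw [Real.norm_of_nonneg (mul_one_sub_exp_nonneg ha hr)]
  exact mul_one_sub_exp_le_max_mul_min hr

lemma hasDerivAt_integral_compensatedExp_of_pos (hm : Integrable (fun r => min r (r ^ 2)) μ)
    (hμ : ∀ᵐ r ∂μ, 0 ≤ r) {a : ℝ} (ha : 0 < a) :
    HasDerivAt (fun l => ∫ r, compensatedExp l r ∂μ)
      (∫ r, r * (1 - Real.exp (-a * r)) ∂μ) a := by
  refine (hasDerivAt_integral_of_dominated_loc_of_deriv_le (Metric.ball_mem_nhds a ha)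
    (Eventually.of_forall fun l => (continuous_compensatedExp l).aestronglyMeasurable)
    (integrable_compensatedExp hm hμ ha.le) (by fun_prop) ?_ (hm.const_mul (max 1 (2 * a)))
    (Eventually.of_forall fun r x _ => hasDerivAt_compensatedExp x r)).2
  filter_upwards [hμ] with r hr x hx
  rw [Real.ball_eq_Ioo, sub_self] at hx
  rw [Real.norm_of_nonneg (mul_one_sub_exp_nonneg hx.1.le hr)]
  calc r * (1 - Real.exp (-x * r)) ≤ max 1 x * min r (r ^ 2) :=
        mul_one_sub_exp_le_max_mul_min hr
    _ ≤ max 1 (2 * a) * min r (r ^ 2) := by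
      gcongr
      linarith [hx.2]

lemma tendsto_integral_compensatedExp_div {L : Filter ℝ} [L.IsCountablyGenerated]
    (hL : L ≤ 𝓝[≠] 0) {l₁ : ℝ} (hint : Integrable (compensatedExp l₁) μ)
    (hbetween : ∀ᶠ l in L, l / l₁ ∈ Ioc 0 1) :
    Tendsto (fun l => (∫ r, compensatedExp l r ∂μ) / l) L (𝓝 0) := by
  simp_rw [← integral_div]
  have h := tendsto_integral_filter_of_dominated_convergence (μ := μ) (f := fun _ => 0)
    (fun r => compensatedExp l₁ r / |l₁|)
    (Eventually.of_forall fun l =>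
      ((continuous_compensatedExp l).div_const l).aestronglyMeasurable)
    (hbetween.mono fun l hl => Eventually.of_forall fun r => abs_compensatedExp_div_le hl r)
    (hint.div_const _)
    (Eventually.of_forall fun r => (tendsto_compensatedExp_div r).mono_left hL)
  simpa using h

lemma hasDerivAt_integral_compensatedExp_zero (hm : Integrable (fun r => min r (r ^ 2)) μ)
    (hμ : ∀ᵐ r ∂μ, 0 ≤ r) : HasDerivAt (fun l => ∫ r, compensatedExp l r ∂μ) 0 0 := by
  set G := fun l => ∫ r, compensatedExp l r ∂μ
  have hslope : slope G 0 = fun l => G l / l := by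
    funext l; simp [G, slope_def_field]
  rw [hasDerivAt_iff_tendsto_slope, hslope, ← nhdsLT_sup_nhdsGT, tendsto_sup]
  constructor
  · by_cases h : ∃ l₀ < 0, Integrable (compensatedExp l₀) μ
    · obtain ⟨l₀, hl₀, hint⟩ := h
      refine tendsto_integral_compensatedExp_div (nhdsLT_le_nhdsNE 0) hint ?_
      filter_upwards [Ioo_mem_nhdsLT hl₀] with l hl
      exact ⟨div_pos_of_neg_of_neg hl.2 hl₀, (div_le_one_of_neg hl₀).2 hl.1.le⟩
    -- then the Bochner integral is the junk value `0` for every `l < 0`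
    · push Not at h
      refine tendsto_const_nhds.congr' ?_
      filter_upwards [self_mem_nhdsWithin] with l hl
      rw [show G l = 0 from integral_undef (h l hl), zero_div]
  · refine tendsto_integral_compensatedExp_div (nhdsGT_le_nhdsNE 0)
      (integrable_compensatedExp hm hμ zero_le_one) ?_
    filter_upwards [Ioo_mem_nhdsGT one_pos] with l hl
    simpa using ⟨hl.1, hl.2.le⟩

lemma hasDerivAt_integral_compensatedExp (hm : Integrable (fun r => min r (r ^ 2)) μ)
    (hμ : ∀ᵐ r ∂μ, 0 ≤ r) {a : ℝ} (ha : 0 ≤ a) :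
    HasDerivAt (fun l => ∫ r, compensatedExp l r ∂μ)
      (∫ r, r * (1 - Real.exp (-a * r)) ∂μ) a := by
  rcases ha.eq_or_lt with rfl | ha
  · simpa using hasDerivAt_integral_compensatedExp_zero hm hμ
  · exact hasDerivAt_integral_compensatedExp_of_pos hm hμ ha

lemma hasDerivAt_mul_add_sq_add_integral_compensatedExp (α β : ℝ)
    (hm : Integrable (fun r => min r (r ^ 2)) μ) (hμ : ∀ᵐ r ∂μ, 0 ≤ r) {a : ℝ} (ha : 0 ≤ a) :
    HasDerivAt (fun l => α * l + β * l ^ 2 + ∫ r, compensatedExp l r ∂μ)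
      (α + β * (2 * a) + ∫ r, r * (1 - Real.exp (-a * r)) ∂μ) a :=
  (((hasDerivAt_id a).const_mul α).add ((hasDerivAt_pow 2 a).const_mul β)).add
    (hasDerivAt_integral_compensatedExp hm hμ ha) |>.congr_deriv (by simp)

end Integral

theorem stmt4_general (α β : ℝ)
    (π : Measure ℝ)
    (hπ : ∫⁻ r in Ioi (0 : ℝ), ENNReal.ofReal (min r (r ^ 2)) ∂π < ⊤)
    (ψ : ℝ → ℝ)
    (hψ : ∀ l : ℝ, ψ l = α * l + β * l ^ 2 +
      ∫ r in Ioi (0 : ℝ), (Real.exp (-l * r) - 1 + l * r) ∂π)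
    (γψ : ℝ → ℝ → ℝ)
    (hγψ : ∀ a b, γψ a b = if a = b then deriv ψ a else (ψ a - ψ b) / (a - b))
    (a b : ℝ) (ha : 0 ≤ a) (hb : 0 ≤ b) :
    ∫ r in Ioi (0 : ℝ),
        (∫ l in (0 : ℝ)..r, Real.exp (-a * l) * (1 - Real.exp (-b * (r - l)))) ∂π
      = γψ a b - (if a = 0 then α else ψ a / a) - β * b := by
  set G := fun l => ∫ r in Ioi (0 : ℝ), compensatedExp l r ∂π
  have hψG : ψ = fun l => α * l + β * l ^ 2 + G l := funext hψ
  have hμ : ∀ᵐ r ∂π.restrict (Ioi 0), (0 : ℝ) ≤ r :=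
    (ae_restrict_mem measurableSet_Ioi).mono fun r hr => le_of_lt hr
  have hm : Integrable (fun r => min r (r ^ 2)) (π.restrict (Ioi 0)) :=
    (lintegral_ofReal_ne_top_iff_integrable (by fun_prop)
      (hμ.mono fun r hr => le_min hr (sq_nonneg r))).1 hπ.ne
  have hfa := integrable_compensatedExp hm hμ ha
  -- `G 0 / 0 = 0` in Lean, so this also covers `a = 0`
  have hdiv : (if a = 0 then α else ψ a / a) = α + β * a + G a / a := by
    split_ifs with ha0
    · simp [ha0]
    · rw [hψG]; field_simp
  rw [hγψ, hdiv]
  split_ifs with hab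
  · subst hab
    simp_rw [integral_exp_mul_one_sub_exp_self]
    rw [hψG, (hasDerivAt_mul_add_sq_add_integral_compensatedExp α β hm hμ ha).deriv,
      integral_sub (integrable_mul_one_sub_exp hm hμ ha) (hfa.div_const a), integral_div]
    ring
  · simp_rw [integral_exp_mul_one_sub_exp_of_ne hab]
    have hfb := integrable_compensatedExp hm hμ hb
    have hfab : Integrable (fun r => compensatedExp a r - compensatedExp b r) _ := hfa.sub hfb
    rw [integral_sub (hfab.div_const _) (hfa.div_const a), integral_div, integral_div,
      integral_sub hfa hfb]
    simp only [hψG, G]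
    field_simp [sub_ne_zero.2 hab]
    ring

/-- With `ψ` and `γ_ψ` as in Statement 3, for all `a, b ≥ 0`:
`∫ π(dr) ∫_0^r e^{-aℓ}(1 - e^{-b(r-ℓ)}) dℓ = γ_ψ(a,b) - ψ(a)/a - βb`,
where `ψ(a)/a` is interpreted as `ψ'(0) = α` when `a = 0`. -/
theorem stmt4 (α β : ℝ) (hα : 0 ≤ α) (hβ : 0 ≤ β)
    (π : Measure ℝ) [SigmaFinite π]
    (hπ : ∫⁻ r in Ioi (0 : ℝ), ENNReal.ofReal (min r (r ^ 2)) ∂π < ⊤)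
    (ψ : ℝ → ℝ)
    (hψ : ∀ l : ℝ, ψ l = α * l + β * l ^ 2 +
      ∫ r in Ioi (0 : ℝ), (Real.exp (-l * r) - 1 + l * r) ∂π)
    (γψ : ℝ → ℝ → ℝ)
    (hγψ : ∀ a b, γψ a b = if a = b then deriv ψ a else (ψ a - ψ b) / (a - b))
    (a b : ℝ) (ha : 0 ≤ a) (hb : 0 ≤ b) :
    ∫ r in Ioi (0 : ℝ),
        (∫ l in (0 : ℝ)..r, Real.exp (-a * l) * (1 - Real.exp (-b * (r - l)))) ∂π
      = γψ a b - (if a = 0 then α else ψ a / a) - β * b :=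
  stmt4_general α β π hπ ψ hψ γψ hγψ a b ha hb
end

section
/- Let h be a continuous nonnegative function on ℝ₊, and for s ≤ s' define m_h(s,s') = inf_{s ≤ r ≤ s'} h(r). Define d_h(s,s') = h(s) + h(s') - 2 m_h(s ∧ s', s ∨ s'). Then d_h is a pseudometric on ℝ₊: d_h(s,s) = 0, d_h is symmetric, and d_h satisfies the triangle inequality d_h(s,u) ≤ d_h(s,t) + d_h(t,u) for all s, t, u ≥ 0. -/
/-!
Splitting `[s, u]` at `t` gives `m_h(s, u) = min (m_h(s, t)) (m_h(t, u))`, and `m_h` only grows as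
the interval shrinks. With these two facts the triangle inequality reduces, in each of the three
positions of `t` relative to `s ≤ u`, to linear arithmetic with `m_h(a, b) ≤ h x` for `x ∈ [a, b]`.
-/

open Set

namespace Excursion

variable {α : Type*} [LinearOrder α] {h : α → ℝ} {a b c e s t u x : α}

/-- `intervalInf h a b` is the paper's `m_h(a, b)`. -/
noncomputable def intervalInf (h : α → ℝ) (a b : α) : ℝ := sInf (h '' Icc a b)

/-- `treeDist h` is the paper's `d_h`. -/
noncomputable def treeDist (h : α → ℝ) (s t : α) : ℝ :=
  h s + h t - 2 * intervalInf h (min s t) (max s t)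

theorem intervalInf_self (h : α → ℝ) (a : α) : intervalInf h a a = h a := by
  rw [intervalInf, Icc_self, image_singleton, csInf_singleton]

theorem intervalInf_le (hh : BddBelow (range h)) (hx : x ∈ Icc a b) : intervalInf h a b ≤ h x :=
  csInf_le (hh.mono (image_subset_range h _)) (mem_image_of_mem h hx)

theorem intervalInf_le_intervalInf (hh : BddBelow (range h)) (hac : a ≤ c) (hce : c ≤ e)
    (heb : e ≤ b) : intervalInf h a b ≤ intervalInf h c e :=
  csInf_le_csInf (hh.mono (image_subset_range h _)) ((nonempty_Icc.2 hce).image h)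
    (image_mono (Icc_subset_Icc hac heb))

theorem intervalInf_eq_min (hh : BddBelow (range h)) (hst : s ≤ t) (htu : t ≤ u) :
    intervalInf h s u = min (intervalInf h s t) (intervalInf h t u) := by
  rw [intervalInf, ← Icc_union_Icc_eq_Icc hst htu, image_union,
    csInf_union (hh.mono (image_subset_range h _)) ((nonempty_Icc.2 hst).image h)
      (hh.mono (image_subset_range h _)) ((nonempty_Icc.2 htu).image h)]
  rfl

theorem treeDist_self (h : α → ℝ) (s : α) : treeDist h s s = 0 := by
  rw [treeDist, min_self, max_self, intervalInf_self]
  ring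

theorem treeDist_comm (h : α → ℝ) (s t : α) : treeDist h s t = treeDist h t s := by
  rw [treeDist, treeDist, min_comm, max_comm, add_comm (h s)]

theorem treeDist_of_le (h : α → ℝ) (hst : s ≤ t) :
    treeDist h s t = h s + h t - 2 * intervalInf h s t := by
  rw [treeDist, min_eq_left hst, max_eq_right hst]

theorem treeDist_of_ge (h : α → ℝ) (hts : t ≤ s) :
    treeDist h s t = h s + h t - 2 * intervalInf h t s := by
  rw [treeDist_comm, treeDist_of_le h hts, add_comm]

theorem treeDist_triangle_of_le (hh : BddBelow (range h)) (hsu : s ≤ u) :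
    treeDist h s u ≤ treeDist h s t + treeDist h t u := by
  rw [treeDist_of_le h hsu]
  rcases le_total t s with hts | hst
  · rw [treeDist_of_ge h hts, treeDist_of_le h (hts.trans hsu)]
    have h₁ := intervalInf_le_intervalInf hh hts hsu le_rfl
    have h₂ := intervalInf_le hh ⟨le_rfl, hts⟩
    linarith
  rcases le_total t u with htu | hut
  · rw [treeDist_of_le h hst, treeDist_of_le h htu, intervalInf_eq_min hh hst htu]
    have h₁ := intervalInf_le hh ⟨hst, le_rfl⟩
    have h₂ := intervalInf_le hh ⟨le_rfl, htu⟩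
    rcases min_choice (intervalInf h s t) (intervalInf h t u) with hmin | hmin <;>
      rw [hmin] <;> linarith
  · rw [treeDist_of_le h hst, treeDist_of_ge h hut]
    have h₁ := intervalInf_le_intervalInf hh le_rfl hsu hut
    have h₂ := intervalInf_le hh ⟨hut, le_rfl⟩
    linarith

theorem treeDist_triangle (hh : BddBelow (range h)) (s t u : α) :
    treeDist h s u ≤ treeDist h s t + treeDist h t u := by
  rcases le_total s u with hsu | hus
  · exact treeDist_triangle_of_le hh hsu
  · calc treeDist h s u = treeDist h u s := treeDist_comm h s u
      _ ≤ treeDist h u t + treeDist h t s := treeDist_triangle_of_le hh hus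
      _ = treeDist h s t + treeDist h t u := by
        rw [treeDist_comm h u t, treeDist_comm h t s, add_comm]

end Excursion

open Excursion in
theorem stmt19_general (h : ℝ → ℝ) (hnn : ∀ t, 0 ≤ h t)
    (m : ℝ → ℝ → ℝ) (hm : ∀ s s', m s s' = sInf (h '' Icc s s'))
    (d : ℝ → ℝ → ℝ) (hd : ∀ s s', d s s' = h s + h s' - 2 * m (min s s') (max s s')) :
    (∀ s, 0 ≤ s → d s s = 0) ∧
    (∀ s s', 0 ≤ s → 0 ≤ s' → d s s' = d s' s) ∧
    (∀ s t u, 0 ≤ s → 0 ≤ t → 0 ≤ u → d s u ≤ d s t + d t u) := by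
  have hh : BddBelow (range h) := ⟨0, by rintro _ ⟨x, rfl⟩; exact hnn x⟩
  have hd' : d = treeDist h := by
    ext s s'
    rw [hd, hm, treeDist, intervalInf]
  subst hd'
  exact ⟨fun s _ => treeDist_self h s, fun s s' _ _ => treeDist_comm h s s',
    fun s t u _ _ _ => treeDist_triangle hh s t u⟩

/-- For a continuous nonnegative function `h` on `ℝ₊`, with
`m_h(s,s') = inf_{s ≤ r ≤ s'} h(r)` and `d_h(s,s') = h(s) + h(s') - 2 m_h(s∧s', s∨s')`,
`d_h` is a pseudometric on `ℝ₊`: it vanishes on the diagonal, is symmetric, and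
satisfies the triangle inequality. -/
theorem stmt19 (h : ℝ → ℝ) (hcont : Continuous h) (hnn : ∀ t, 0 ≤ h t)
    (m : ℝ → ℝ → ℝ) (hm : ∀ s s', m s s' = sInf (h '' Icc s s'))
    (d : ℝ → ℝ → ℝ) (hd : ∀ s s', d s s' = h s + h s' - 2 * m (min s s') (max s s')) :
    (∀ s, 0 ≤ s → d s s = 0) ∧
    (∀ s s', 0 ≤ s → 0 ≤ s' → d s s' = d s' s) ∧
    (∀ s t u, 0 ≤ s → 0 ≤ t → 0 ≤ u → d s u ≤ d s t + d t u) :=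
  stmt19_general h hnn m hm d hd
end
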